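/- Let M be a compact subset of ℝ² whose boundary contains no vertical interval. Define a decomposition 𝒢₀ of ℝ² whose nondegenerate elements are the connected components of V ∩ M over all vertical lines V (these components are points or vertical closed intervals), with all other elements singletons. Then 𝒢₀ is an upper semicontinuous cellular decomposition of ℝ². -/

import Mathlib

open Set Function Topology Filter

/-- The plane. -/
abbrev Plane := EuclideanSpace ℝ (Fin 2)

/-- A family of subsets is upper semicontinuous (in the sequential sense). -/
def IsUSCFamily {α : Type*} [TopologicalSpace α] (G : Set (Set α)) : Prop :=
  ∀ (g : ℕ → Set α) (x y : ℕ → α) (x₀ y₀ : α),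
    (∀ n, g n ∈ G) → (∀ n, x n ∈ g n) → (∀ n, y n ∈ g n) →
    Tendsto x atTop (nhds x₀) → Tendsto y atTop (nhds y₀) →
    ∃ g₀ ∈ G, x₀ ∈ g₀ ∧ y₀ ∈ g₀

/-- The vertical decomposition of the plane determined by `M`: the connected
components of the intersections of `M` with vertical lines, together with the
singletons of points outside `M`. -/
def verticalDecomp (M : Set Plane) : Set (Set Plane) :=
  {g | (∃ x ∈ M, g = connectedComponentIn ({p : Plane | p 0 = x 0} ∩ M) x) ∨
    ∃ x ∉ M, g = ({x} : Set Plane)}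

/-!
Every element of the decomposition lies on a vertical line and, being connected there, is a
point or a compact vertical segment, hence convex. Upper semicontinuity comes from convexity:
if `x n ≠ y n` lie in a common element then `x n, y n` share their first coordinate and the
segment between them lies in `M`; both properties pass to limits since `M` is closed, so the
limits `x₀, y₀` are joined by a vertical segment in `M` and lie in one component.
-/

protected theorem IsClosed.connectedComponentIn {X : Type*} [TopologicalSpace X] {F : Set X}
    (hF : IsClosed F) (x : X) : IsClosed (connectedComponentIn F x) := by
  by_cases hx : x ∈ F
  · refine closure_subset_iff_isClosed.mp ?_
    exact isPreconnected_connectedComponentIn.closure.subset_connectedComponentIn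
      (subset_closure (mem_connectedComponentIn hx))
      (closure_minimal (connectedComponentIn_subset F x) hF)
  · rw [connectedComponentIn_eq_empty hx]
    exact isClosed_empty

theorem isClosed_setOf_segment_subset {E : Type*} [AddCommGroup E] [Module ℝ E]
    [TopologicalSpace E] [IsTopologicalAddGroup E] [ContinuousSMul ℝ E] {F : Set E}
    (hF : IsClosed F) : IsClosed {q : E × E | segment ℝ q.1 q.2 ⊆ F} := by
  have h : {q : E × E | segment ℝ q.1 q.2 ⊆ F} =
      ⋂ t ∈ Icc (0 : ℝ) 1, (fun q : E × E => AffineMap.lineMap q.1 q.2 t) ⁻¹' F := by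
    ext q
    simp only [segment_eq_image_lineMap, image_subset_iff, mem_ofPred_eq, mem_iInter]
    rfl
  rw [h]
  exact isClosed_biInter fun t _ =>
    hF.preimage (continuous_fst.lineMap continuous_snd continuous_const)

theorem convex_verticalLine (a : ℝ) : Convex ℝ {p : Plane | p 0 = a} :=
  convex_hyperplane (EuclideanSpace.proj (0 : Fin 2) : Plane →L[ℝ] ℝ).toLinearMap.isLinear a

theorem convex_of_isPreconnected_of_subset_vertical {a : ℝ} {s : Set Plane}
    (hs : IsPreconnected s) (hline : s ⊆ {p : Plane | p 0 = a}) : Convex ℝ s := by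
  let π₁ : Plane →L[ℝ] ℝ := EuclideanSpace.proj 1
  refine convex_iff_segment_subset.2 fun p hp q hq r hr => ?_
  obtain ⟨w, hw, hw1⟩ : π₁ r ∈ π₁ '' s := by
    refine (hs.image _ π₁.continuous.continuousOn).ordConnected.uIcc_subset
      (mem_image_of_mem _ hp) (mem_image_of_mem _ hq) ?_
    rw [← segment_eq_uIcc]
    exact (image_segment ℝ π₁.toLinearMap.toAffineMap p q).subset (mem_image_of_mem _ hr)
  have hw0 : w 0 = r 0 :=
    (hline hw).trans ((convex_verticalLine a).segment_subset (hline hp) (hline hq) hr).symm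
  have hwr : w = r := by
    ext i
    fin_cases i
    exacts [hw0, hw1]
  exact hwr ▸ hw

def verticalComponent (M : Set Plane) (z : Plane) : Set Plane :=
  connectedComponentIn ({p : Plane | p 0 = z 0} ∩ M) z

section verticalComponent

variable {M : Set Plane} {x y z : Plane}

theorem verticalComponent_subset : verticalComponent M z ⊆ {p : Plane | p 0 = z 0} ∩ M :=
  connectedComponentIn_subset _ _

theorem mem_verticalComponent_self (hz : z ∈ M) : z ∈ verticalComponent M z :=
  mem_connectedComponentIn ⟨rfl, hz⟩

theorem convex_verticalComponent : Convex ℝ (verticalComponent M z) :=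
  convex_of_isPreconnected_of_subset_vertical isPreconnected_connectedComponentIn
    fun _ hp => (verticalComponent_subset hp).1

theorem isCompact_verticalComponent (hM : IsCompact M) : IsCompact (verticalComponent M z) :=
  hM.of_isClosed_subset
    ((isClosed_eq (EuclideanSpace.proj (0 : Fin 2)).continuous continuous_const).inter
      hM.isClosed |>.connectedComponentIn z)
    (verticalComponent_subset.trans inter_subset_right)

theorem verticalComponent_eq_of_mem (h : y ∈ verticalComponent M z) :
    verticalComponent M y = verticalComponent M z := by
  have hline : {p : Plane | p 0 = y 0} = {p : Plane | p 0 = z 0} := by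
    rw [(verticalComponent_subset h).1]
  rw [verticalComponent, hline, ← connectedComponentIn_eq h, verticalComponent]

theorem mem_verticalComponent_of_segment_subset (h0 : x 0 = y 0) (hseg : segment ℝ x y ⊆ M) :
    y ∈ verticalComponent M x := by
  have hline : segment ℝ x y ⊆ {p : Plane | p 0 = x 0} :=
    (convex_verticalLine (x 0)).segment_subset rfl h0.symm
  exact (convex_segment x y).isPreconnected.subset_connectedComponentIn
    (left_mem_segment ℝ x y) (subset_inter hline hseg) (right_mem_segment ℝ x y)

end verticalComponent

section verticalDecomp

variable {M : Set Plane} {g : Set Plane} {x y z : Plane}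

theorem verticalComponent_mem_verticalDecomp (hz : z ∈ M) :
    verticalComponent M z ∈ verticalDecomp M :=
  Or.inl ⟨z, hz, rfl⟩

theorem eq_of_mem_verticalDecomp (hg : g ∈ verticalDecomp M) (hz : z ∈ g) :
    (z ∈ M ∧ g = verticalComponent M z) ∨ (z ∉ M ∧ g = {z}) := by
  rcases hg with ⟨w, -, rfl⟩ | ⟨w, hw, rfl⟩
  · exact Or.inl ⟨(verticalComponent_subset hz).2, (verticalComponent_eq_of_mem hz).symm⟩
  · rw [mem_singleton_iff.1 hz]
    exact Or.inr ⟨hw, rfl⟩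

theorem exists_mem_verticalDecomp (M : Set Plane) (z : Plane) :
    ∃ g ∈ verticalDecomp M, z ∈ g := by
  by_cases hz : z ∈ M
  · exact ⟨_, verticalComponent_mem_verticalDecomp hz, mem_verticalComponent_self hz⟩
  · exact ⟨{z}, Or.inr ⟨z, hz, rfl⟩, rfl⟩

theorem pairwise_disjoint_verticalDecomp (M : Set Plane) :
    (verticalDecomp M).Pairwise fun g₁ g₂ => Disjoint g₁ g₂ := by
  refine fun g₁ hg₁ g₂ hg₂ hne => disjoint_left.2 fun z hz₁ hz₂ => hne ?_
  rcases eq_of_mem_verticalDecomp hg₁ hz₁ with ⟨hzM, rfl⟩ | ⟨hzM, rfl⟩ <;>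
    rcases eq_of_mem_verticalDecomp hg₂ hz₂ with ⟨hzM', rfl⟩ | ⟨hzM', rfl⟩
  all_goals first | rfl | contradiction

theorem segment_subset_of_mem_verticalDecomp (hg : g ∈ verticalDecomp M) (hx : x ∈ g)
    (hy : y ∈ g) (hxy : x ≠ y) : x 0 = y 0 ∧ segment ℝ x y ⊆ M := by
  rcases hg with ⟨w, -, rfl⟩ | ⟨w, -, rfl⟩
  · exact ⟨(verticalComponent_subset hx).1.trans (verticalComponent_subset hy).1.symm,
      convex_verticalComponent.segment_subset hx hy |>.trans
        (verticalComponent_subset.trans inter_subset_right)⟩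
  · exact absurd ((mem_singleton_iff.1 hx).trans (mem_singleton_iff.1 hy).symm) hxy

theorem isUSCFamily_verticalDecomp (hM : IsClosed M) : IsUSCFamily (verticalDecomp M) := by
  intro g x y x₀ y₀ hg hxg hyg hx hy
  by_cases hfreq : ∃ᶠ n in atTop, x n = y n
  · obtain ⟨g₀, hg₀, hx₀⟩ := exists_mem_verticalDecomp M x₀
    exact ⟨g₀, hg₀, hx₀, tendsto_nhds_unique_of_frequently_eq hx hy hfreq ▸ hx₀⟩
  -- Eventually `x n ≠ y n`, so `(x n, y n)` is a vertical pair spanning a segment in `M`,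
  -- and such pairs form a closed set.
  have hclosed : IsClosed {q : Plane × Plane | q.1 0 = q.2 0 ∧ segment ℝ q.1 q.2 ⊆ M} :=
    (isClosed_eq (by fun_prop) (by fun_prop)).inter (isClosed_setOf_segment_subset hM)
  obtain ⟨h0, hseg⟩ := hclosed.mem_of_tendsto (hx.prodMk_nhds hy) <|
    (not_frequently.1 hfreq).mono fun n hn =>
      segment_subset_of_mem_verticalDecomp (hg n) (hxg n) (hyg n) hn
  have hx₀ : x₀ ∈ M := hseg (left_mem_segment ℝ x₀ y₀)
  exact ⟨_, verticalComponent_mem_verticalDecomp hx₀, mem_verticalComponent_self hx₀,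
    mem_verticalComponent_of_segment_subset h0 hseg⟩

theorem nonempty_isCompact_convex_of_mem_verticalDecomp (hM : IsCompact M)
    (hg : g ∈ verticalDecomp M) :
    g.Nonempty ∧ IsCompact g ∧ Convex ℝ g := by
  rcases hg with ⟨z, hz, rfl⟩ | ⟨z, -, rfl⟩
  · exact ⟨⟨z, mem_verticalComponent_self hz⟩, isCompact_verticalComponent hM,
      convex_verticalComponent⟩
  · exact ⟨singleton_nonempty z, isCompact_singleton, convex_singleton z⟩

end verticalDecomp

theorem stmt_18_general (M : Set Plane) (hM : IsCompact M) :
    (⋃₀ verticalDecomp M = univ) ∧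
    ((verticalDecomp M).Pairwise fun g₁ g₂ => Disjoint g₁ g₂) ∧
    IsUSCFamily (verticalDecomp M) ∧
    (∀ g ∈ verticalDecomp M, g.Nonempty ∧ IsCompact g ∧ Convex ℝ g) :=
  ⟨sUnion_eq_univ_iff.2 (exists_mem_verticalDecomp M), pairwise_disjoint_verticalDecomp M,
    isUSCFamily_verticalDecomp hM.isClosed,
    fun _ hg => nonempty_isCompact_convex_of_mem_verticalDecomp hM hg⟩

/-- If `M` is a compact planar set whose boundary contains no vertical
interval, then the vertical decomposition of the plane (components of
intersections of `M` with vertical lines, extended trivially) is an upper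
semicontinuous decomposition of the plane into cellular elements: each element
is a nonempty compact convex set (a point or a vertical closed interval). -/
theorem stmt_18 (M : Set Plane) (hM : IsCompact M)
    (hnovert : ∀ a c d : ℝ, c < d →
      ¬ ({p : Plane | p 0 = a ∧ p 1 ∈ Set.Icc c d} ⊆ frontier M)) :
    (⋃₀ verticalDecomp M = univ) ∧
    ((verticalDecomp M).Pairwise fun g₁ g₂ => Disjoint g₁ g₂) ∧
    IsUSCFamily (verticalDecomp M) ∧
    (∀ g ∈ verticalDecomp M, g.Nonempty ∧ IsCompact g ∧ Convex ℝ g) :=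
  stmt_18_general M hM
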